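/- arXiv:1708.01708 — 2 statements merged into one kernel-verified Lean document; each statement's English description precedes it below -/
import Mathlib

section
/- Let {λ_n} (n ∈ ℕ) be a sequence of distinct real numbers and suppose {G_n} is a sequence such that for each n ∈ ℕ, G_n is a graph on the n vertices {1, …, n} and G_n is the induced subgraph of G_{n+1} on {1, …, n}. Then for any sequence of positive real numbers {ε_n} there exists a sequence of real symmetric matrices {A_n}, with A_n of size n × n, such that for every n ∈ ℕ: (i) the graph of A_n is G_n and the spectrum (set of eigenvalues) of A_n is {λ_1, …, λ_n}, and (ii) ‖(A_n ⊕ [λ_{n+1}]) − A_{n+1}‖_op < ε_n, where A_n ⊕ [λ_{n+1}] denotes the (n+1) × (n+1) block-diagonal matrix with blocks A_n and the 1×1 matrix [λ_{n+1}], and ‖·‖_op denotes the operator norm of a matrix acting on Euclidean space ℝ^{n+1} with the ℓ² norm. -/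
/-!
For distinct `d`, the matrices `expSkewConj d S = exp (S - Sᵀ) * diagonal d * exp (-(S - Sᵀ))` are
symmetric with spectrum `range d`. At `S = 0` the derivative of their strictly upper triangular
part is `X ↦ [X - Xᵀ, diagonal d]`, whose `(i, j)` entry is `(X i j - X j i) * (d j - d i)`; it is
surjective, so by the inverse function theorem the strictly upper triangular parts near `0`
include `t • (adjacency matrix of G)` for small `t > 0`. This gives matrices with graph `G` and
spectrum `range d` arbitrarily close to `diagonal d`. If `A n` is close enough to
`diagonal (λ_0, …, λ_{n-1})`, then `A n ⊕ [λ_n]` is close to `diagonal (λ_0, …, λ_n)`, hence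
to `A (n + 1)`.
-/

open Matrix NormedSpace Filter Topology

theorem hasStrictFDerivAt_exp_mul_mul_exp_neg {𝕂 𝔸 : Type*} [RCLike 𝕂] [NormedRing 𝔸]
    [NormedAlgebra 𝕂 𝔸] [CompleteSpace 𝔸] (a : 𝔸) :
    HasStrictFDerivAt (fun x : 𝔸 => exp x * a * exp (-x))
      ((ContinuousLinearMap.mul 𝕂 𝔸).flip a - ContinuousLinearMap.mul 𝕂 𝔸 a) 0 := by
  have hexp : HasStrictFDerivAt (exp : 𝔸 → 𝔸) (1 : 𝔸 →L[𝕂] 𝔸) 0 := hasStrictFDerivAt_exp_zero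
  have hexp_neg : HasStrictFDerivAt (fun x : 𝔸 => exp (-x)) (-1 : 𝔸 →L[𝕂] 𝔸) 0 := by
    simpa using (neg_zero (G := 𝔸) ▸ hexp).comp (0 : 𝔸) (hasStrictFDerivAt_id (0 : 𝔸)).neg
  refine ((hexp.mul' (hasStrictFDerivAt_const a 0)).mul' hexp_neg).congr_fderiv ?_
  ext x
  simp [sub_eq_neg_add]

namespace Matrix

section StrictUpperEntries

variable {ι R : Type*} [LinearOrder ι] [Semiring R]

def strictUpperEntries : Matrix ι ι R →ₗ[R] ({p : ι × ι // p.1 < p.2} → R) :=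
  LinearMap.pi fun p => entryLinearMap R R p.1.1 p.1.2

@[simp]
lemma strictUpperEntries_apply (A : Matrix ι ι R) (p : {p : ι × ι // p.1 < p.2}) :
    strictUpperEntries A p = A p.1.1 p.1.2 := rfl

@[simp]
lemma strictUpperEntries_diagonal (d : ι → R) : strictUpperEntries (diagonal d) = 0 := by
  ext p
  simp [diagonal_apply_ne _ p.2.ne]

lemma ne_zero_iff_adj_of_strictUpperEntries_eq_smul [NoZeroDivisors R] [Nontrivial R]
    {A : Matrix ι ι R} (hA : A.IsSymm) (G : SimpleGraph ι) [DecidableRel G.Adj] {t : R}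
    (ht : t ≠ 0) (h : strictUpperEntries A = t • strictUpperEntries (G.adjMatrix R))
    {i j : ι} (hij : i ≠ j) :
    A i j ≠ 0 ↔ G.Adj i j := by
  wlog hlt : i < j generalizing i j
  · rw [← hA.apply i j, G.adj_comm]
    exact this hij.symm (hij.lt_or_gt.resolve_left hlt)
  have hentry : A i j = t * G.adjMatrix R i j := congrFun h ⟨(i, j), hlt⟩
  by_cases hadj : G.Adj i j <;> simp [hentry, hadj, ht]

end StrictUpperEntries

section ExpSkewConj

variable {ι : Type*} [Fintype ι] [DecidableEq ι] (d : ι → ℝ)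

noncomputable def expSkewConj (S : Matrix ι ι ℝ) : Matrix ι ι ℝ :=
  exp (S - Sᵀ) * diagonal d * exp (-(S - Sᵀ))

@[simp]
lemma expSkewConj_zero : expSkewConj d 0 = diagonal d := by
  simp [expSkewConj]

lemma continuous_expSkewConj : Continuous (expSkewConj d) := by
  unfold expSkewConj
  open scoped Norms.Operator in fun_prop

lemma isSymm_expSkewConj (S : Matrix ι ι ℝ) : (expSkewConj d S).IsSymm := by
  have hT : exp (-(S - Sᵀ)) = (exp (S - Sᵀ))ᵀ := by
    rw [← exp_transpose, neg_sub, transpose_sub, transpose_transpose]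
  rw [IsSymm, expSkewConj, hT]
  simp [Matrix.mul_assoc]

lemma spectrum_expSkewConj (S : Matrix ι ι ℝ) :
    spectrum ℝ (expSkewConj d S) = Set.range d := by
  obtain ⟨u, hu⟩ := isUnit_exp (S - Sᵀ)
  rw [expSkewConj, Matrix.exp_neg, ← hu, ← coe_units_inv, spectrum.units_conjugate,
    spectrum_diagonal]

end ExpSkewConj

variable {ι : Type*} [Fintype ι] [LinearOrder ι] {d : ι → ℝ}

lemma map_strictUpperEntries_expSkewConj_nhds_zero (hd : Function.Injective d) :
    Filter.map (strictUpperEntries ∘ expSkewConj d) (𝓝 0) = 𝓝 0 := by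
  open scoped Norms.Operator in
  · obtain ⟨K, hK⟩ : ∃ K : Matrix ι ι ℝ →L[ℝ] Matrix ι ι ℝ, ∀ X, K X = X - Xᵀ :=
      ⟨LinearMap.toContinuousLinearMap
        (LinearMap.id - (transposeLinearEquiv ι ι ℝ ℝ).toLinearMap), fun X => rfl⟩
    have hconj := hasStrictFDerivAt_exp_mul_mul_exp_neg (𝕂 := ℝ) (diagonal d)
    rw [← map_zero K] at hconj
    have h := (LinearMap.toContinuousLinearMap strictUpperEntries).hasStrictFDerivAt.comp 0
      (hconj.comp 0 K.hasStrictFDerivAt)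
    have hmap := h.map_nhds_eq_of_surj <| LinearMap.range_eq_top.mpr fun y =>
      ⟨of fun i j => if hij : i < j then y ⟨(i, j), hij⟩ / (d j - d i) else 0, by
        ext p
        have hne : d p.1.2 - d p.1.1 ≠ 0 := sub_ne_zero.mpr (hd.ne p.2.ne')
        change strictUpperEntries (K _ * diagonal d - diagonal d * K _) p = y p
        simp [hK, mul_diagonal, diagonal_mul, p.2, p.2.not_gt]
        field_simp⟩
    simp only [hK, LinearMap.coe_toContinuousLinearMap'] at hmap
    -- the operator-norm topologies are definitionally the product topologies
    convert hmap using 2 <;> first | rfl | simp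

theorem exists_isSymm_adj_spectrum_mem_nhds_diagonal (hd : Function.Injective d)
    (G : SimpleGraph ι) {U : Set (Matrix ι ι ℝ)} (hU : U ∈ 𝓝 (diagonal d)) :
    ∃ A ∈ U, A.IsSymm ∧ (∀ i j, i ≠ j → (A i j ≠ 0 ↔ G.Adj i j)) ∧
      spectrum ℝ A = Set.range d := by
  classical
  set V := expSkewConj d ⁻¹' U
  have hV : V ∈ 𝓝 0 :=
    (continuous_expSkewConj d).continuousAt.preimage_mem_nhds (by rwa [expSkewConj_zero])
  have himage : strictUpperEntries ∘ expSkewConj d '' V ∈ 𝓝 0 :=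
    map_strictUpperEntries_expSkewConj_nhds_zero hd ▸ image_mem_map hV
  have hsmall : ∀ᶠ t in 𝓝[>] (0 : ℝ),
      t • strictUpperEntries (G.adjMatrix ℝ) ∈ strictUpperEntries ∘ expSkewConj d '' V :=
    ((continuous_id.smul continuous_const).tendsto' 0 0 (zero_smul _ _)).mono_left
      nhdsWithin_le_nhds |>.eventually himage
  obtain ⟨t, ⟨S, hSU, hS⟩, ht⟩ := (hsmall.and self_mem_nhdsWithin).exists
  exact ⟨expSkewConj d S, hSU, isSymm_expSkewConj d S,
    fun i j => ne_zero_iff_adj_of_strictUpperEntries_eq_smul (isSymm_expSkewConj d S) G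
      ht.ne' hS, spectrum_expSkewConj d S⟩

section PadCorner

variable {α : Type*} [Zero α] {n : ℕ}

def padCorner (A : Matrix (Fin n) (Fin n) α) (c : α) : Matrix (Fin (n + 1)) (Fin (n + 1)) α :=
  of fun i j =>
    if h : (i : ℕ) < n ∧ (j : ℕ) < n then A ⟨i, h.1⟩ ⟨j, h.2⟩ else if i = j then c else 0

lemma continuous_padCorner [TopologicalSpace α] (c : α) :
    Continuous fun A : Matrix (Fin n) (Fin n) α => padCorner A c := by
  refine continuous_pi fun i => continuous_pi fun j => ?_
  simp only [padCorner, of_apply]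
  split_ifs
  · exact (continuous_apply _).comp (continuous_apply _)
  all_goals exact continuous_const

lemma padCorner_diagonal (f : ℕ → α) (n : ℕ) :
    padCorner (diagonal fun i : Fin n => f i) (f n) = diagonal fun i : Fin (n + 1) => f i := by
  ext i j
  simp only [padCorner, of_apply, diagonal_apply, Fin.ext_iff]
  split_ifs <;> first | rfl | (congr 1; omega)

end PadCorner

end Matrix

theorem finite_graph_inverse_spectrum_approx_general
    (l : ℕ → ℝ) (hl : Function.Injective l)
    (G : ∀ n : ℕ, SimpleGraph (Fin n))
    (ε : ℕ → ℝ) (hε : ∀ n, 0 < ε n) :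
    ∃ A : ∀ n : ℕ, Matrix (Fin n) (Fin n) ℝ,
      ∀ n : ℕ,
        (A n).IsSymm ∧
        (∀ i j : Fin n, i ≠ j → (A n i j ≠ 0 ↔ (G n).Adj i j)) ∧
        spectrum ℝ (A n) = Set.range (fun i : Fin n => l i) ∧
        ‖Matrix.toEuclideanCLM (𝕜 := ℝ)
            ((Matrix.of fun i j : Fin (n + 1) =>
                if h : (i : ℕ) < n ∧ (j : ℕ) < n then A n ⟨i, h.1⟩ ⟨j, h.2⟩
                else if i = j then l n else 0)
              - A (n + 1))‖ < ε n := by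
  open scoped Matrix.Norms.L2Operator in
  · set D : ∀ n : ℕ, Matrix (Fin n) (Fin n) ℝ := fun n => diagonal fun i : Fin n => l i
    have hnear : ∀ n, ∀ᶠ A in 𝓝 (D n),
        dist (padCorner A (l n)) (D (n + 1)) < ε n / 2 ∧ dist A (D n) < ε (n - 1) / 2 := by
      intro n
      have hpad : Tendsto (padCorner · (l n)) (𝓝 (D n)) (𝓝 (D (n + 1))) := by
        rw [show D (n + 1) = padCorner (D n) (l n) from (padCorner_diagonal l n).symm]
        exact (continuous_padCorner _).tendsto _
      exact (Metric.tendsto_nhds.mp hpad _ (half_pos (hε n))).and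
        (Metric.tendsto_nhds.mp tendsto_id _ (half_pos (hε _)))
    choose A hAnear hA using fun n =>
      exists_isSymm_adj_spectrum_mem_nhds_diagonal (hl.comp Fin.val_injective) (G n) (hnear n)
    refine ⟨A, fun n => ⟨(hA n).1, (hA n).2.1, (hA n).2.2, ?_⟩⟩
    have hnext : dist (A (n + 1)) (D (n + 1)) < ε n / 2 := (hAnear (n + 1)).2
    -- the L² operator norm `‖M‖` is by definition `‖toEuclideanCLM M‖` (`Matrix.cstar_norm_def`)
    calc ‖padCorner (A n) (l n) - A (n + 1)‖
        = dist (padCorner (A n) (l n)) (A (n + 1)) := (dist_eq_norm _ _).symm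
      _ ≤ dist (padCorner (A n) (l n)) (D (n + 1)) + dist (A (n + 1)) (D (n + 1)) :=
        dist_triangle_right _ _ _
      _ < ε n := by linarith [(hAnear n).1]

/-- Let `(λ_n)` be a sequence of distinct real numbers and let `(G_n)` be a
sequence of graphs, where `G_n` has vertex set `Fin n` and `G_n` is the induced subgraph of
`G_{n+1}` on the first `n` vertices. Then for any sequence `(ε_n)` of positive reals there
is a sequence of real symmetric matrices `(A_n)`, with `A_n` of size `n × n`, such that for
every `n`:
(i) the graph of `A_n` is `G_n` and the spectrum of `A_n` is `{λ_0, …, λ_{n-1}}`, and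
(ii) `‖(A_n ⊕ [λ_n]) - A_{n+1}‖_op < ε_n`, where `A_n ⊕ [λ_n]` is the block-diagonal
matrix with blocks `A_n` and `[λ_n]`, and the operator norm is that of the corresponding
operator on Euclidean space. -/
theorem finite_graph_inverse_spectrum_approx
    (l : ℕ → ℝ) (hl : Function.Injective l)
    (G : ∀ n : ℕ, SimpleGraph (Fin n))
    (hG : ∀ (n : ℕ) (i j : Fin n),
      (G n).Adj i j ↔ (G (n + 1)).Adj i.castSucc j.castSucc)
    (ε : ℕ → ℝ) (hε : ∀ n, 0 < ε n) :
    ∃ A : ∀ n : ℕ, Matrix (Fin n) (Fin n) ℝ,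
      ∀ n : ℕ,
        (A n).IsSymm ∧
        (∀ i j : Fin n, i ≠ j → (A n i j ≠ 0 ↔ (G n).Adj i j)) ∧
        spectrum ℝ (A n) = Set.range (fun i : Fin n => l i) ∧
        ‖Matrix.toEuclideanCLM (𝕜 := ℝ)
            ((Matrix.of fun i j : Fin (n + 1) =>
                if h : (i : ℕ) < n ∧ (j : ℕ) < n then A n ⟨i, h.1⟩ ⟨j, h.2⟩
                else if i = j then l n else 0)
              - A (n + 1))‖ < ε n :=
  finite_graph_inverse_spectrum_approx_general l hl G ε hε
end

section
/- Suppose {T_n} (n ∈ ℕ) is a sequence of self-adjoint unbounded operators on a real Hilbert space H with Dom(T_n) = D for all n, where D is a dense subspace of H. If {T_n} converges to an unbounded operator T with Dom(T) = D, and λ ∈ σ(T_n) for all n, then λ ∈ σ(T). -/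
/-- A sequence `(Tₙ)` of unbounded operators on a real Hilbert space `H` converges to an
unbounded operator `T` if, for every sufficiently large `n`, the difference `T - Tₙ` is a
bounded operator on `Dom Tₙ ∩ Dom T` and its operator norm tends to `0`; equivalently, there
is a sequence `c n → 0` such that eventually `‖T x - Tₙ x‖ ≤ c n * ‖x‖` for all
`x ∈ Dom Tₙ ∩ Dom T`. -/
def UnbConvergesTo {H : Type*} [NormedAddCommGroup H] [InnerProductSpace ℝ H]
    (Tseq : ℕ → H →ₗ.[ℝ] H) (T : H →ₗ.[ℝ] H) : Prop :=
  ∃ c : ℕ → ℝ,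
    Filter.Tendsto c Filter.atTop (nhds 0) ∧
    ∀ᶠ n in Filter.atTop, ∀ (x : H) (hx : x ∈ T.domain) (hx' : x ∈ (Tseq n).domain),
      ‖T ⟨x, hx⟩ - Tseq n ⟨x, hx'⟩‖ ≤ c n * ‖x‖

/-- A real number `l` belongs to the resolvent set of an unbounded operator `T` on a real
Hilbert space `H` if there is a bounded operator `S` on `H` such that `S v ∈ Dom T` and
`(T - l•I)(S v) = v` for all `v ∈ H`, and `S ((T - l•I) w) = w` for all `w ∈ Dom T`. -/
def unbResolventSet {H : Type*} [NormedAddCommGroup H] [InnerProductSpace ℝ H]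
    (T : H →ₗ.[ℝ] H) : Set ℝ :=
  {l | ∃ S : H →L[ℝ] H,
    (∀ v : H, ∃ h : S v ∈ T.domain, T ⟨S v, h⟩ - l • S v = v) ∧
    (∀ w : T.domain, S (T w - l • (w : H)) = w)}

/-- The spectrum of an unbounded operator is the complement (in `ℝ`) of its resolvent set. -/
def unbSpectrum {H : Type*} [NormedAddCommGroup H] [InnerProductSpace ℝ H]
    (T : H →ₗ.[ℝ] H) : Set ℝ :=
  (unbResolventSet T)ᶜ

/-- Suppose `(Tₙ)` is a sequence of self-adjoint unbounded operators on a
real Hilbert space `H`, all with the same dense domain `D`. If `(Tₙ)` converges to an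
unbounded operator `T` with `Dom T = D`, and `λ ∈ σ(Tₙ)` for all `n`, then `λ ∈ σ(T)`. -/
theorem transfer_of_spectral_values_in_the_limit
    {H : Type*} [NormedAddCommGroup H] [InnerProductSpace ℝ H] [CompleteSpace H]
    (D : Submodule ℝ H) (hD : Dense (D : Set H))
    (Tseq : ℕ → H →ₗ.[ℝ] H)
    (hdom : ∀ n, (Tseq n).domain = D)
    (hsa : ∀ n, IsSelfAdjoint (Tseq n))
    (T : H →ₗ.[ℝ] H) (hTdom : T.domain = D)
    (hconv : UnbConvergesTo Tseq T)
    (l : ℝ) (hl : ∀ n, l ∈ unbSpectrum (Tseq n)) :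
    l ∈ unbSpectrum T := by
  intro hres
  obtain ⟨S, hS1, hS2⟩ := hres
  obtain ⟨c, hc, hev⟩ := hconv
  have hc' : Filter.Tendsto (fun n => |c n| * ‖S‖) Filter.atTop (nhds 0) := by
    simpa using hc.abs.mul_const ‖S‖
  have hev2 : ∀ᶠ n in Filter.atTop, |c n| * ‖S‖ < 1 :=
    hc'.eventually (eventually_lt_nhds one_pos)
  obtain ⟨n, hn1, hn2⟩ := (hev.and hev2).exists
  have hDn : (Tseq n).domain = T.domain := (hdom n).trans hTdom.symm
  let e : T.domain ≃ₗ[ℝ] (Tseq n).domain := LinearEquiv.ofEq _ _ hDn.symm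
  let Bd : T.domain →ₗ[ℝ] H := T.toFun - ((Tseq n).toFun ∘ₗ (e : T.domain →ₗ[ℝ] (Tseq n).domain))
  have hmem : ∀ v : H, S v ∈ T.domain := fun v => (hS1 v).choose
  have hTS : ∀ v : H, T ⟨S v, hmem v⟩ - l • S v = v := fun v => (hS1 v).choose_spec
  let Slin : H →ₗ[ℝ] T.domain := LinearMap.codRestrict T.domain (S : H →ₗ[ℝ] H) hmem
  let K0 : H →ₗ[ℝ] H := Bd.comp Slin
  have hmem' : ∀ v : H, S v ∈ (Tseq n).domain := fun v => hDn.symm ▸ hmem v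
  have hbound : ∀ v : H, ‖K0 v‖ ≤ (|c n| * ‖S‖) * ‖v‖ := by
    intro v
    have h1 : ‖T ⟨S v, hmem v⟩ - Tseq n ⟨S v, hmem' v⟩‖ ≤ c n * ‖S v‖ :=
      hn1 (S v) (hmem v) (hmem' v)
    have h2 : K0 v = T ⟨S v, hmem v⟩ - Tseq n ⟨S v, hmem' v⟩ := rfl
    calc ‖K0 v‖ ≤ c n * ‖S v‖ := h2 ▸ h1
      _ ≤ |c n| * ‖S v‖ := mul_le_mul_of_nonneg_right (le_abs_self _) (norm_nonneg _)
      _ ≤ |c n| * (‖S‖ * ‖v‖) := mul_le_mul_of_nonneg_left (S.le_opNorm v) (abs_nonneg _)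
      _ = (|c n| * ‖S‖) * ‖v‖ := (mul_assoc _ _ _).symm
  let K : H →L[ℝ] H := K0.mkContinuous _ hbound
  have hKnorm : ‖K‖ < 1 :=
    lt_of_le_of_lt (K0.mkContinuous_norm_le (by positivity) hbound) hn2
  let u : (H →L[ℝ] H)ˣ := Units.oneSub K hKnorm
  let Sn : H →L[ℝ] H := S.comp (↑u⁻¹ : H →L[ℝ] H)
  refine hl n ⟨Sn, fun v => ?_, fun x => ?_⟩
  · set w : H := (↑u⁻¹ : H →L[ℝ] H) v with hw
    refine ⟨hmem' (w), ?_⟩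
    have key : Tseq n ⟨S w, hmem' w⟩ = T ⟨S w, hmem w⟩ - K w := by
      have : K w = T ⟨S w, hmem w⟩ - Tseq n ⟨S w, hmem' w⟩ := rfl
      rw [this]; abel
    have huv : w - K w = v := by
      have h1 : (↑u * ↑u⁻¹ : H →L[ℝ] H) v = v := by rw [u.mul_inv]; rfl
      calc w - K w = (1 - K : H →L[ℝ] H) w := by
            simp [ContinuousLinearMap.sub_apply]
        _ = (↑u : H →L[ℝ] H) ((↑u⁻¹ : H →L[ℝ] H) v) := rfl
        _ = v := by rw [← ContinuousLinearMap.mul_apply]; exact h1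
    show Tseq n ⟨S w, hmem' w⟩ - l • S w = v
    rw [key]
    have := hTS w
    calc T ⟨S w, hmem w⟩ - K w - l • S w
        = (T ⟨S w, hmem w⟩ - l • S w) - K w := by abel
      _ = w - K w := by rw [this]
      _ = v := huv
  · set w' : T.domain := ⟨(x : H), hDn ▸ x.2⟩ with hw'
    set y : H := T w' - l • (w' : H) with hy
    have hSy : S y = (w' : H) := hS2 w'
    have hSlin : Slin y = w' := Subtype.ext hSy
    have hKy : K y = T w' - Tseq n x := by
      have h0 : K y = Bd (Slin y) := rfl
      rw [h0, hSlin]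
      rfl
    have harg : Tseq n x - l • (x : H) = y - K y := by
      rw [hKy, hy]
      have hcoe : (w' : H) = (x : H) := rfl
      rw [hcoe]; abel
    rw [harg]
    have h1 : y - K y = (↑u : H →L[ℝ] H) y := by
      simp [u, Units.oneSub, ContinuousLinearMap.sub_apply]
    have h2 : (↑u⁻¹ : H →L[ℝ] H) ((↑u : H →L[ℝ] H) y) = y := by
      rw [← ContinuousLinearMap.mul_apply, u.inv_mul]; rfl
    calc Sn (y - K y) = S ((↑u⁻¹ : H →L[ℝ] H) ((↑u : H →L[ℝ] H) y)) := by rw [h1]; rfl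
      _ = S y := by rw [h2]
      _ = (x : H) := hSy
end
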